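/- For γ > 0 let D_γ be the symmetric 6×6 real matrix whose (m,n) entry equals s_γ = γ(5γ²+5γ+1)/(8(1+2γ)²(1+4γ)²(3+4γ)) if m = n, equals z_γ = γ³/(8(1+2γ)²(1+4γ)²(3+4γ)) if m + n = 7, and equals t_γ = −γ²/(16(1+2γ)(1+4γ)²(3+4γ)) otherwise. Then for every θ ∈ [0,1] and every γ > 0, the convex combination θ D_1 + (1−θ) D_γ is symmetric and positive definite; in particular det(θ D_1 + (1−θ) D_γ) > 0. -/

import Mathlib

/-!
`D_γ` has the form `s I + z J + t (𝟙 - I - J)` with `J` the reversal permutation of `Fin 6`.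
Its eigenvalues are `s + z + 4t` (constant vector), `s + z - 2t` (reversal-invariant vectors with
zero sum) and `s - z` (reversal-antisymmetric vectors), and the quadratic form is the matching
weighted sum of squares. Writing `d = 8 (1 + 2γ)² (1 + 4γ)² (3 + 4γ)`, these eigenvalues are
`γ (2γ + 1) (γ + 1) / d`, `γ (2γ + 1) (4γ + 1) / d` and `γ (4γ + 1) (γ + 1) / d`, all positive for
`γ > 0`. Positive definite matrices form a convex cone, so every blend is positive definite too.
-/

noncomputable section

def sG (γ : ℝ) : ℝ :=
  γ * (5 * γ ^ 2 + 5 * γ + 1) / (8 * (1 + 2 * γ) ^ 2 * (1 + 4 * γ) ^ 2 * (3 + 4 * γ))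

def tG (γ : ℝ) : ℝ := -(γ ^ 2) / (16 * (1 + 2 * γ) * (1 + 4 * γ) ^ 2 * (3 + 4 * γ))

def zG (γ : ℝ) : ℝ := γ ^ 3 / (8 * (1 + 2 * γ) ^ 2 * (1 + 4 * γ) ^ 2 * (3 + 4 * γ))

/-- The matrix `D_γ` of the purely volumetric Dirichlet enrichment functionals: entry
`(m,n)` equals `s_γ` on the diagonal, `z_γ` on the anti-diagonal (`m + n = 7` in 1-based
indexing, i.e. `m + n = 5` for `Fin 6`), and `t_γ` otherwise. -/
def Dvol (γ : ℝ) : Matrix (Fin 6) (Fin 6) ℝ :=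
  Matrix.of fun m n : Fin 6 =>
    if m = n then sG γ else if (m : ℕ) + (n : ℕ) = 5 then zG γ else tG γ

open Matrix

theorem Matrix.PosDef.convex_comb {n R : Type*} [Fintype n] [Field R] [LinearOrder R]
    [IsOrderedRing R] [StarRing R] [StarOrderedRing R]
    {A B : Matrix n n R} (hA : A.PosDef) (hB : B.PosDef) {θ : R} (hθ : θ ∈ Set.Icc 0 1) :
    (θ • A + (1 - θ) • B).PosDef := by
  rcases hθ.2.eq_or_lt with rfl | hθ1
  · simpa using hA
  · exact .posSemidef_add (hA.posSemidef.smul hθ.1) (hB.smul (sub_pos.2 hθ1))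

def diagAntidiagMatrix (s z t : ℝ) : Matrix (Fin 6) (Fin 6) ℝ :=
  of fun m n : Fin 6 => if m = n then s else if (m : ℕ) + (n : ℕ) = 5 then z else t

lemma diagAntidiagMatrix_isSymm (s z t : ℝ) : (diagAntidiagMatrix s z t).IsSymm := by
  ext m n
  simp only [diagAntidiagMatrix, transpose_apply, of_apply, eq_comm (a := n), Nat.add_comm (n : ℕ)]

lemma dotProduct_diagAntidiagMatrix_mulVec (s z t : ℝ) (x : Fin 6 → ℝ) :
    x ⬝ᵥ diagAntidiagMatrix s z t *ᵥ x =
      ((s + z + 4 * t) * ((x 0 + x 5) + (x 1 + x 4) + (x 2 + x 3)) ^ 2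
        + (s + z - 2 * t) * (((x 0 + x 5) - (x 1 + x 4)) ^ 2 + ((x 1 + x 4) - (x 2 + x 3)) ^ 2
            + ((x 2 + x 3) - (x 0 + x 5)) ^ 2)) / 6
        + (s - z) * ((x 0 - x 5) ^ 2 + (x 1 - x 4) ^ 2 + (x 2 - x 3) ^ 2) / 2 := by
  simp [diagAntidiagMatrix, mulVec, dotProduct, Fin.sum_univ_six]
  ring

theorem diagAntidiagMatrix_posDef {s z t : ℝ} (h₁ : 0 < s + z + 4 * t) (h₂ : 0 < s + z - 2 * t)
    (h₃ : 0 < s - z) : (diagAntidiagMatrix s z t).PosDef := by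
  refine posDef_iff_dotProduct_mulVec.2
    ⟨isHermitian_iff_isSymm.2 (diagAntidiagMatrix_isSymm s z t), fun x hx => ?_⟩
  set μ := min (min (s + z + 4 * t) (s + z - 2 * t)) (s - z)
  have hμ : 0 < μ := lt_min (lt_min h₁ h₂) h₃
  have hxx : 0 < x ⬝ᵥ x := by simpa using dotProduct_star_self_pos_iff.2 hx
  rw [star_trivial, dotProduct_diagAntidiagMatrix_mulVec]
  calc 0 < μ * (x ⬝ᵥ x) := mul_pos hμ hxx
    _ = (μ * ((x 0 + x 5) + (x 1 + x 4) + (x 2 + x 3)) ^ 2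
        + μ * (((x 0 + x 5) - (x 1 + x 4)) ^ 2 + ((x 1 + x 4) - (x 2 + x 3)) ^ 2
            + ((x 2 + x 3) - (x 0 + x 5)) ^ 2)) / 6
        + μ * ((x 0 - x 5) ^ 2 + (x 1 - x 4) ^ 2 + (x 2 - x 3) ^ 2) / 2 := by
      simp only [dotProduct, Fin.sum_univ_six]; ring
    _ ≤ _ := by
      gcongr
      · exact (min_le_left _ _).trans (min_le_left _ _)
      · exact (min_le_left _ _).trans (min_le_right _ _)
      · exact min_le_right _ _

lemma Dvol_eq_diagAntidiagMatrix (γ : ℝ) : Dvol γ = diagAntidiagMatrix (sG γ) (zG γ) (tG γ) := rfl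

lemma Dvol_posDef {γ : ℝ} (hγ : 0 < γ) : (Dvol γ).PosDef := by
  have h₁ : sG γ + zG γ + 4 * tG γ
      = γ * (2 * γ + 1) * (γ + 1) / (8 * (1 + 2 * γ) ^ 2 * (1 + 4 * γ) ^ 2 * (3 + 4 * γ)) := by
    rw [sG, zG, tG]; field_simp; ring
  have h₂ : sG γ + zG γ - 2 * tG γ
      = γ * (2 * γ + 1) * (4 * γ + 1) / (8 * (1 + 2 * γ) ^ 2 * (1 + 4 * γ) ^ 2 * (3 + 4 * γ)) := by
    rw [sG, zG, tG]; field_simp; ring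
  have h₃ : sG γ - zG γ
      = γ * (4 * γ + 1) * (γ + 1) / (8 * (1 + 2 * γ) ^ 2 * (1 + 4 * γ) ^ 2 * (3 + 4 * γ)) := by
    rw [sG, zG]; field_simp; ring
  rw [Dvol_eq_diagAntidiagMatrix]
  exact diagAntidiagMatrix_posDef (by rw [h₁]; positivity) (by rw [h₂]; positivity)
    (by rw [h₃]; positivity)

/-- Any convex blend `θ D₁ + (1−θ) D_γ` of the uniform and Dirichlet volumetric moment
matrices is symmetric positive definite; in particular its determinant is positive. -/
theorem Dvol_convex_blend_posDef (θ γ : ℝ) (hθ : θ ∈ Set.Icc (0 : ℝ) 1) (hγ : 0 < γ) :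
    (θ • Dvol 1 + (1 - θ) • Dvol γ).IsSymm ∧
      (θ • Dvol 1 + (1 - θ) • Dvol γ).PosDef ∧
      0 < (θ • Dvol 1 + (1 - θ) • Dvol γ).det := by
  have hpd := (Dvol_posDef one_pos).convex_comb (Dvol_posDef hγ) hθ
  exact ⟨isHermitian_iff_isSymm.1 hpd.isHermitian, hpd, hpd.det_pos⟩

end
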